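/- arXiv:2603.02014 — 5 statements merged into one kernel-verified Lean document; each statement's English description precedes it below -/
import Mathlib

section
/- Let f ≥ 1 and k : ZMod f → ℤ with k(i) ≥ 1 for all i. Define M(k) as the set of i such that ∃ s ≥ 1 with k(i+j) = 2 for 1 ≤ j ≤ s-1 and k(i+s) = 1. Define M̃(k) as the set of i such that either (k(i) ≥ 3 and i ∈ M(k)), or (k(i) = 2, k(i+1) = 1, k(i+2) ∈ {1,2}, and if k(i+2) = 2 then i+2 ∈ M(k)). Then M̃(k) ⊆ M(k). -/
open scoped Classical

/-- The set M(k): indices i such that for some s ≥ 1, k(i+1)=⋯=k(i+s-1)=2 and k(i+s)=1. -/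
def Mset (f : ℕ) (k : ZMod f → ℤ) : Set (ZMod f) :=
  {i | ∃ s : ℕ, 1 ≤ s ∧ (∀ j : ℕ, 1 ≤ j → j ≤ s - 1 → k (i + (j : ZMod f)) = 2) ∧
    k (i + (s : ZMod f)) = 1}


/-- The set M̃(k). -/
def Mtilde (f : ℕ) (k : ZMod f → ℤ) : Set (ZMod f) :=
  {i | (3 ≤ k i ∧ i ∈ Mset f k) ∨
    (k i = 2 ∧ k (i + 1) = 1 ∧ (k (i + 2) = 1 ∨ k (i + 2) = 2) ∧
      (k (i + 2) = 2 → i + 2 ∈ Mset f k))}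

theorem Mtilde_subset_Mset (f : ℕ) (hf : 1 ≤ f) (k : ZMod f → ℤ)
    (hk : ∀ i, 1 ≤ k i) :
    Mtilde f k ⊆ Mset f k := by
  intro i h
  rcases h with ⟨_, hM⟩ | ⟨_, h1, _⟩
  · exact hM
  · exact ⟨1, le_refl 1, fun j hj hj' => absurd (le_trans hj hj') (by norm_num),
      by simpa using h1⟩
end

section
/- Let p ≥ 3 be a prime, f ≥ 1, and k : ZMod f → ℤ with 1 ≤ k(i) ≤ p for all i. With M(k) and k'(i) = k(i) - (if i ∈ M(k) then 1 else 0) + p·(if i-1 ∈ M(k) then 1 else 0) as above, one has 2 ≤ k'(i) ≤ p + 1 for every i. In particular the weight k' is regular. -/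
open scoped Classical

lemma Mset_prev_le {f : ℕ} {k : ZMod f → ℤ} {i : ZMod f} (h : i - 1 ∈ Mset f k) :
    k i ≤ 2 := by
  obtain ⟨s, hs1, hmid, hend⟩ := h
  rcases eq_or_lt_of_le hs1 with hs | hs
  · have : k (i - 1 + ((1 : ℕ) : ZMod f)) = 1 := by rw [hs]; exact hend
    simp at this
    omega
  · have := hmid 1 le_rfl (by omega)
    simp at this
    omega

lemma Mset_of_one {f : ℕ} {k : ZMod f → ℤ} {i : ZMod f} (h : k i = 1) :
    i - 1 ∈ Mset f k := by
  refine ⟨1, le_rfl, fun j hj1 hj2 => by omega, ?_⟩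
  simpa using h

lemma Mset_prev_of_two {f : ℕ} {k : ZMod f → ℤ} {i : ZMod f} (hi : i ∈ Mset f k)
    (h : k i = 2) : i - 1 ∈ Mset f k := by
  obtain ⟨s, hs1, hmid, hend⟩ := hi
  refine ⟨s + 1, by omega, ?_, ?_⟩
  · intro j hj1 hj2
    rcases eq_or_lt_of_le hj1 with hj | hj
    · rw [← hj]; simpa using h
    · have hcast : i - 1 + (j : ZMod f) = i + ((j - 1 : ℕ) : ZMod f) := by
        push_cast [Nat.cast_sub (by omega : 1 ≤ j)]
        ring
      rw [hcast]
      exact hmid (j - 1) (by omega) (by omega)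
  · have hcast : i - 1 + ((s + 1 : ℕ) : ZMod f) = i + (s : ZMod f) := by
      push_cast; ring
    rw [hcast]; exact hend

lemma Mset_of_prev_two {f : ℕ} {k : ZMod f → ℤ} {i : ZMod f} (hi : i - 1 ∈ Mset f k)
    (h : k i = 2) : i ∈ Mset f k := by
  obtain ⟨s, hs1, hmid, hend⟩ := hi
  rcases eq_or_lt_of_le hs1 with hs | hs
  · exfalso
    have : k (i - 1 + ((1 : ℕ) : ZMod f)) = 1 := by rw [hs]; exact hend
    simp at this
    omega
  · refine ⟨s - 1, by omega, ?_, ?_⟩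
    · intro j hj1 hj2
      have hcast : i + (j : ZMod f) = i - 1 + ((j + 1 : ℕ) : ZMod f) := by
        push_cast; ring
      rw [hcast]
      exact hmid (j + 1) (by omega) (by omega)
    · have hcast : i + ((s - 1 : ℕ) : ZMod f) = i - 1 + (s : ZMod f) := by
        push_cast [Nat.cast_sub (by omega : 1 ≤ s)]
        ring
      rw [hcast]; exact hend

theorem kprime_regular (p : ℕ) (hp : p.Prime) (hp3 : 3 ≤ p) (f : ℕ) (hf : 1 ≤ f)
    (k : ZMod f → ℤ) (hk : ∀ i, 1 ≤ k i ∧ k i ≤ p)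
    (k' : ZMod f → ℤ)
    (hk' : ∀ i, k' i = k i - (if i ∈ Mset f k then 1 else 0)
      + (p : ℤ) * (if i - 1 ∈ Mset f k then 1 else 0)) :
    ∀ i, 2 ≤ k' i ∧ k' i ≤ p + 1 := by
  intro i
  have hp3' : (3 : ℤ) ≤ p := by exact_mod_cast hp3
  obtain ⟨hk1, hk2⟩ := hk i
  have hki := hk' i
  by_cases h1 : i ∈ Mset f k <;> by_cases h2 : i - 1 ∈ Mset f k <;>
    simp [h1, h2] at hki
  · have := Mset_prev_le h2
    constructor <;> linarith
  · have h3 : 3 ≤ k i := by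
      by_contra hc
      push_neg at hc
      interval_cases h : (k i)
      · exact h2 (Mset_of_one h)
      · exact h2 (Mset_prev_of_two h1 h)
    constructor <;> linarith
  · have hle := Mset_prev_le h2
    have : k i = 1 := by
      by_contra hc
      have : k i = 2 := by omega
      exact h1 (Mset_of_prev_two h2 this)
    constructor <;> linarith
  · have : 2 ≤ k i := by
      by_contra hc
      have : k i = 1 := by omega
      exact h2 (Mset_of_one this)
    constructor <;> linarith
end

section
/- Let f ≥ 1 and k : ZMod f → ℤ with k(i) ≥ 1 for all i. Assume there is no index i with k(i) = 2 and k(i+1) = 1. Then M̃(k) = { i : ZMod f | k(i) ≥ 3 and k(i+1) = 1 }. Moreover, under the same hypothesis, every i ∈ M(k) with k(i) ≥ 3 satisfies k(i+1) = 1. -/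
open scoped Classical

theorem Mtilde_of_no_two_one (f : ℕ) (hf : 1 ≤ f) (k : ZMod f → ℤ)
    (hk : ∀ i, 1 ≤ k i) (hno : ¬ ∃ i, k i = 2 ∧ k (i + 1) = 1) :
    Mtilde f k = {i : ZMod f | 3 ≤ k i ∧ k (i + 1) = 1} ∧
    ∀ i ∈ Mset f k, 3 ≤ k i → k (i + 1) = 1 := by
  have key : ∀ i, i ∈ Mset f k → k (i + 1) = 1 := by
    intro i hi
    obtain ⟨s, hs1, h2, h1⟩ := hi
    match s, hs1 with
    | 1, _ => simpa using h1
    | (m + 2), _ =>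
      exfalso
      apply hno
      refine ⟨i + (m + 1 : ℕ), ?_, ?_⟩
      · exact h2 (m + 1) (by omega) (by omega)
      · have : (i + (m + 1 : ℕ)) + 1 = i + ((m + 2 : ℕ) : ZMod f) := by
          push_cast; ring
        rw [this]; exact h1
  constructor
  · ext i
    simp only [Mtilde, Set.mem_setOf_eq]
    constructor
    · rintro (⟨h3, hM⟩ | ⟨h2, h1, _⟩)
      · exact ⟨h3, key i hM⟩
      · exact absurd ⟨i, h2, h1⟩ hno
    · rintro ⟨h3, h1⟩
      exact Or.inl ⟨h3, ⟨1, le_refl 1, by omega, by simpa using h1⟩⟩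
  · exact fun i hi _ => key i hi
end

section
/- Let p ≥ 3 be a prime, f ≥ 1, and k : ZMod f → ℤ with 1 ≤ k(i) ≤ p for all i, and assume there is no index i with k(i) = 2 and k(i+1) = 1. Let μ ∈ M̃(k) and set k^μ = k' + 2·e_μ where k'(i) = k(i) - (if i ∈ M(k) then 1 else 0) + p·(if i-1 ∈ M(k) then 1 else 0). Then 2 ≤ k^μ(i) ≤ p + 1 for all i. -/
open scoped Classical

lemma mem_Mset_of_succ_one {f : ℕ} {k : ZMod f → ℤ} {i : ZMod f} (h : k (i + 1) = 1) :
    i ∈ Mset f k :=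
  ⟨1, le_refl 1, fun _ hj1 hj0 => absurd hj0 (by omega), by simpa using h⟩

lemma val_le_two_of_pred_mem {f : ℕ} {k : ZMod f → ℤ} {i : ZMod f}
    (h : i - 1 ∈ Mset f k) : k i = 1 ∨ k i = 2 := by
  obtain ⟨s, hs, hmid, hend⟩ := h
  have he : i - 1 + ((1 : ℕ) : ZMod f) = i := by push_cast; ring
  rcases eq_or_lt_of_le hs with h | h
  · left; rw [← h, he] at hend; exact hend
  · right; have := hmid 1 le_rfl (by omega); rw [he] at this; exact this

lemma mem_of_pred_mem_two {f : ℕ} {k : ZMod f → ℤ} {i : ZMod f}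
    (h : i - 1 ∈ Mset f k) (h2 : k i = 2) : i ∈ Mset f k := by
  obtain ⟨s, hs, hmid, hend⟩ := h
  have hs2 : 2 ≤ s := by
    rcases eq_or_lt_of_le hs with h | h
    · exfalso
      rw [← h, show i - 1 + ((1 : ℕ) : ZMod f) = i by push_cast; ring] at hend
      omega
    · omega
  refine ⟨s - 1, by omega, ?_, ?_⟩
  · intro j hj1 hjs
    have := hmid (j + 1) (by omega) (by omega)
    rwa [show i - 1 + ((j + 1 : ℕ) : ZMod f) = i + (j : ZMod f) by push_cast; ring] at this
  · rw [show i + ((s - 1 : ℕ) : ZMod f) = i - 1 + (s : ZMod f) by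
      rw [Nat.cast_sub hs]; push_cast; ring]
    exact hend

lemma pred_mem_of_mem_two {f : ℕ} {k : ZMod f → ℤ} {i : ZMod f}
    (h : i ∈ Mset f k) (h2 : k i = 2) : i - 1 ∈ Mset f k := by
  obtain ⟨s, hs, hmid, hend⟩ := h
  refine ⟨s + 1, by omega, ?_, ?_⟩
  · intro j hj1 hjs
    rcases eq_or_lt_of_le hj1 with h | h
    · rw [← h, show i - 1 + ((1 : ℕ) : ZMod f) = i by push_cast; ring]
      exact h2
    · have := hmid (j - 1) (by omega) (by omega)
      rw [show i - 1 + ((j : ℕ) : ZMod f) = i + ((j - 1 : ℕ) : ZMod f) by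
        rw [Nat.cast_sub (by omega)]; push_cast; ring]
      exact this
  · rw [show i - 1 + ((s + 1 : ℕ) : ZMod f) = i + (s : ZMod f) by push_cast; ring]
    exact hend

theorem kmu_bounds (p : ℕ) (hp : p.Prime) (hp3 : 3 ≤ p) (f : ℕ) (hf : 1 ≤ f)
    (k : ZMod f → ℤ) (hk : ∀ i, 1 ≤ k i ∧ k i ≤ p)
    (hno : ¬ ∃ i, k i = 2 ∧ k (i + 1) = 1)
    (μ : ZMod f) (hμ : μ ∈ Mtilde f k)
    (k' kμ : ZMod f → ℤ)
    (hk' : ∀ i, k' i = k i - (if i ∈ Mset f k then 1 else 0)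
      + (p : ℤ) * (if i - 1 ∈ Mset f k then 1 else 0))
    (hkμ : ∀ i, kμ i = k' i + 2 * (if i = μ then 1 else 0)) :
    ∀ i, 2 ≤ kμ i ∧ kμ i ≤ p + 1 := by
  obtain ⟨hμ3, hμM⟩ : 3 ≤ k μ ∧ μ ∈ Mset f k := by
    rcases hμ with h | ⟨h2, h1, _⟩
    · exact h
    · exact absurd ⟨μ, h2, h1⟩ hno
  have hpZ : (3 : ℤ) ≤ p := by exact_mod_cast hp3
  intro i
  rw [hkμ i, hk' i]
  by_cases hie : i = μ
  · subst hie
    obtain ⟨hk1, hk2⟩ := hk i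
    have hP : i - 1 ∉ Mset f k := fun h => by
      rcases val_le_two_of_pred_mem h with h' | h' <;> omega
    simp only [if_pos hμM, if_neg hP, if_pos rfl]
    constructor <;> push_cast <;> omega
  · obtain ⟨hk1, hk2⟩ := hk i
    simp only [if_neg hie, mul_zero, add_zero]
    by_cases hiM : i ∈ Mset f k <;> by_cases hiP : i - 1 ∈ Mset f k <;>
      simp only [if_pos, if_neg, hiM, hiP, if_true, if_false, mul_one, mul_zero, add_zero]
    · rcases val_le_two_of_pred_mem hiP with h' | h' <;> constructor <;> omega
    · have h1 : k i ≠ 1 := fun h =>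
        hiP (mem_Mset_of_succ_one (by rwa [show i - 1 + 1 = i from by ring]))
      have h2 : k i ≠ 2 := fun h => hiP (pred_mem_of_mem_two hiM h)
      constructor <;> omega
    · have h2 : k i ≠ 2 := fun h => hiM (mem_of_pred_mem_two hiP h)
      rcases val_le_two_of_pred_mem hiP with h' | h' <;> constructor <;> omega
    · have h1 : k i ≠ 1 := fun h =>
        hiP (mem_Mset_of_succ_one (by rwa [show i - 1 + 1 = i from by ring]))
      constructor <;> omega
end

section
/- Let p be an odd prime and f ≥ 1. Let k : ZMod f → ℤ satisfy 1 ≤ k(i) ≤ p for all i, assume there is no i with k(i) = 2 and k(i+1) = 1, and assume k(0) ≥ 3 and k(1) = 1. Let M(k) = { i | ∃ s ≥ 1, k(i+1) = ⋯ = k(i+s-1) = 2 and k(i+s) = 1 } and k'(i) = k(i) - [i ∈ M(k)] + p·[i-1 ∈ M(k)]. For a subset J ⊆ ZMod f define d_J(i) = (if i = 0 then 1 else 0) + (if i ∈ J then k'(i) - 1 else 0). Then for every subset J ⊆ ZMod f, the integer Σ_{i=0}^{f-1} d_J(i)·p^{f-1-i} is NOT divisible by p^f - 1. -/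
open scoped Classical

lemma sum_digits_ub (p : ℤ) (hp : 2 ≤ p) (n : ℕ) (a : ℕ → ℤ)
    (ha : ∀ i, i < n → a i ≤ p) :
    ∑ i ∈ Finset.range n, a i * p ^ i ≤ 2 * p ^ n - 2 := by
  induction n with
  | zero => simp
  | succ m ih =>
    rw [Finset.sum_range_succ]
    have h1 := ih (fun i hi => ha i (by omega))
    have hpm : (0:ℤ) < p ^ m := pow_pos (by omega) m
    have h2 : a m * p ^ m ≤ p * p ^ m :=
      mul_le_mul_of_nonneg_right (ha m (by omega)) (le_of_lt hpm)
    have hps : p ^ (m+1) = p ^ m * p := pow_succ p m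
    nlinarith

lemma digits_eq_zero (p : ℤ) (hp : 2 ≤ p) :
    ∀ (n : ℕ) (a : ℕ → ℤ), (∀ i, i < n → -p < a i ∧ a i < p) →
      (∑ i ∈ Finset.range n, a i * p ^ i) = 0 → ∀ i, i < n → a i = 0 := by
  intro n
  induction n with
  | zero => intro a _ _ i hi; exact absurd hi (by omega)
  | succ m ih =>
    intro a ha hsum i hi
    rw [Finset.sum_range_succ'] at hsum
    have hdsum : p ∣ ∑ i ∈ Finset.range m, a (i + 1) * p ^ (i + 1) := by
      apply Finset.dvd_sum
      intro j _
      exact Dvd.dvd.mul_left (dvd_pow_self p (Nat.succ_ne_zero j)) _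
    have hdvd : p ∣ a 0 := by
      have ha0eq : a 0 = -∑ i ∈ Finset.range m, a (i+1) * p ^ (i+1) := by
        have := hsum
        simp only [pow_zero, mul_one] at this
        linarith
      rw [ha0eq]
      exact dvd_neg.mpr hdsum
    have ha0 : a 0 = 0 := by
      rcases hdvd with ⟨c, hc⟩
      have hb := ha 0 (by omega)
      rcases lt_trichotomy c 0 with h|h|h
      · nlinarith [hb.1]
      · simp [hc, h]
      · nlinarith [hb.2]
    have hsum' : ∑ i ∈ Finset.range m, a (i+1) * p ^ i = 0 := by
      have h2 : (∑ i ∈ Finset.range m, a (i+1) * p ^ i) * p = 0 := by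
        rw [Finset.sum_mul]
        have hcg : ∀ j ∈ Finset.range m, a (j+1) * p ^ j * p = a (j+1) * p ^ (j+1) := by
          intro j _; ring
        rw [Finset.sum_congr rfl hcg]
        have h3 : a 0 * p ^ 0 = 0 := by simp [ha0]
        linarith
      exact (mul_eq_zero.mp h2).resolve_right (by omega)
    rcases Nat.eq_zero_or_pos i with h|h
    · subst h; exact ha0
    · obtain ⟨i', rfl⟩ : ∃ i', i = i' + 1 := ⟨i - 1, by omega⟩
      exact ih (fun j => a (j+1)) (fun j hj => ha (j+1) (by omega)) hsum' i' (by omega)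

theorem impliedshape_core (p : ℕ) (hp : p.Prime) (hodd : Odd p) (f : ℕ) (hf : 1 ≤ f)
    (k : ZMod f → ℤ) (hk : ∀ i, 1 ≤ k i ∧ k i ≤ p)
    (hno : ¬ ∃ i, k i = 2 ∧ k (i + 1) = 1)
    (h0 : 3 ≤ k 0) (h1 : k 1 = 1)
    (k' : ZMod f → ℤ)
    (hk' : ∀ i, k' i = k i - (if i ∈ Mset f k then 1 else 0)
      + (p : ℤ) * (if i - 1 ∈ Mset f k then 1 else 0))
    (J : Set (ZMod f))
    (d : ZMod f → ℤ)
    (hd : ∀ i, d i = (if i = 0 then 1 else 0) + (if i ∈ J then k' i - 1 else 0)) :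
    ¬ ((p : ℤ) ^ f - 1 ∣ ∑ i ∈ Finset.range f, d (i : ZMod f) * (p : ℤ) ^ (f - 1 - i)) := by
  intro hdvd
  haveI : NeZero f := ⟨by omega⟩
  have hp3 : 3 ≤ p := by
    have h2 := hp.two_le
    rcases hodd with ⟨m, hm⟩
    omega
  have hp3' : (3:ℤ) ≤ (p:ℤ) := by exact_mod_cast hp3
  -- f = 1 is impossible
  have hf2 : 2 ≤ f := by
    by_contra h
    push_neg at h
    have hf1 : f = 1 := by omega
    subst hf1
    have h10 : (1 : ZMod 1) = 0 := Subsingleton.elim _ _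
    rw [h10] at h1
    omega
  -- Mset characterization
  have hM : ∀ i : ZMod f, i ∈ Mset f k ↔ k (i+1) = 1 := by
    intro i
    constructor
    · rintro ⟨s, hs1, hmid, hend⟩
      rcases Nat.eq_or_lt_of_le hs1 with h | h
      · rw [← h] at hend
        simpa using hend
      · exfalso
        apply hno
        refine ⟨i + ((s-1 : ℕ) : ZMod f), hmid (s-1) (by omega) le_rfl, ?_⟩
        have hcast : i + ((s-1:ℕ) : ZMod f) + 1 = i + (s : ZMod f) := by
          have : ((s-1:ℕ) : ZMod f) + 1 = (s : ZMod f) := by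
            rw [Nat.cast_sub hs1]
            push_cast
            ring
          rw [add_assoc, this]
        rw [hcast]
        exact hend
    · intro h
      exact ⟨1, le_rfl, by intro j hj1 hj2; omega, by simpa using h⟩
  have hk'2 : ∀ i : ZMod f, k' i = k i - (if k (i+1) = 1 then 1 else 0)
      + (p:ℤ) * (if k i = 1 then 1 else 0) := by
    intro i
    rw [hk' i]
    have e1 : (i ∈ Mset f k) = (k (i+1) = 1) := propext (hM i)
    have e2 : (i - 1 ∈ Mset f k) = (k i = 1) := by
      rw [propext (hM (i-1)), sub_add_cancel]
    simp only [e1, e2]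
  have hk'0 : k' 0 = k 0 - 1 := by
    rw [hk'2 0, zero_add, if_pos h1, if_neg (by omega : ¬ k 0 = 1)]
    ring
  -- digit bounds
  have hbound : ∀ i : ZMod f, 0 ≤ k' i - 1 ∧ k' i - 1 ≤ (p:ℤ) := by
    intro i
    have hki := hk i
    have hki1 := hk (i+1)
    have hne2 : ¬ (k i = 2 ∧ k (i+1) = 1) := fun h => hno ⟨i, h⟩
    rw [hk'2 i]
    split_ifs with hA hB hB <;> simp only [mul_one, mul_zero] <;> omega
  have hD : ∀ i : ZMod f, 0 ≤ d i ∧ d i ≤ (p:ℤ) := by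
    intro i
    have hb := hbound i
    have hk0 := hk 0
    rw [hd i]
    by_cases h0' : i = 0
    · subst h0'
      rw [if_pos rfl]
      split_ifs with hJ <;> omega
    · rw [if_neg h0']
      split_ifs with hJ <;> omega
  have hd0 : 1 ≤ d 0 ∧ d 0 ≤ (p:ℤ) - 1 := by
    have hk0 := hk 0
    rw [hd 0, if_pos rfl]
    split_ifs with hJ <;> omega
  -- reindex the sum
  set b : ℕ → ℤ := fun j => d (((f - 1 - j : ℕ) : ZMod f)) with hb
  have hNr : (∑ i ∈ Finset.range f, d ((i:ZMod f)) * (p:ℤ) ^ (f-1-i))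
      = ∑ j ∈ Finset.range f, b j * (p:ℤ) ^ j := by
    rw [← Finset.sum_range_reflect (fun j => b j * (p:ℤ)^j) f]
    apply Finset.sum_congr rfl
    intro i hi
    simp only [hb]
    rw [Nat.sub_sub_self (by simp at hi; omega : i ≤ f - 1)]
  rw [hNr] at hdvd
  have hDb : ∀ j, 0 ≤ b j ∧ b j ≤ (p:ℤ) := fun j => hD _
  have hbf1 : b (f-1) = d 0 := by
    simp only [hb, Nat.sub_self, Nat.cast_zero]
  have hppos : (0:ℤ) < (p:ℤ) := by omega
  have hpfm : (0:ℤ) < (p:ℤ) ^ (f-1) := pow_pos hppos _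
  -- lower bound
  have hNpos : 1 ≤ ∑ j ∈ Finset.range f, b j * (p:ℤ)^j := by
    have h0mem : f - 1 ∈ Finset.range f := by simp; omega
    have hterm : (1:ℤ) ≤ b (f-1) * (p:ℤ) ^ (f-1) := by
      rw [hbf1]
      nlinarith [hd0.1, hpfm]
    calc (1:ℤ) ≤ b (f-1) * (p:ℤ)^(f-1) := hterm
      _ ≤ ∑ j ∈ Finset.range f, b j * (p:ℤ)^j := by
          apply Finset.single_le_sum (fun j _ => mul_nonneg (hDb j).1 (by positivity)) h0mem
  -- upper bound
  have hfsplit : f = (f - 1) + 1 := by omega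
  have hNub : ∑ j ∈ Finset.range f, b j * (p:ℤ)^j < 2 * ((p:ℤ)^f - 1) := by
    have hsplit : ∑ j ∈ Finset.range f, b j * (p:ℤ)^j
        = (∑ j ∈ Finset.range (f-1), b j * (p:ℤ)^j) + b (f-1) * (p:ℤ)^(f-1) := by
      conv_lhs => rw [hfsplit]
      rw [Finset.sum_range_succ]
    have hub := sum_digits_ub (p:ℤ) (by omega) (f-1) b (fun i _ => (hDb i).2)
    have hps : (p:ℤ) ^ f = (p:ℤ)^(f-1) * (p:ℤ) := by
      conv_lhs => rw [hfsplit]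
      rw [pow_succ]
    rw [hsplit, hbf1]
    nlinarith [hd0.2, hpfm]
  -- hence the sum equals p^f - 1
  have hpf1 : (0:ℤ) < (p:ℤ)^f - 1 := by
    have : (1:ℤ) < (p:ℤ)^f := by
      calc (1:ℤ) < (p:ℤ) := by omega
        _ = (p:ℤ)^1 := (pow_one _).symm
        _ ≤ (p:ℤ)^f := pow_le_pow_right₀ (by omega) hf
    omega
  obtain ⟨c, hc⟩ := hdvd
  have hc1 : c = 1 := by
    rcases lt_trichotomy c 1 with h|h|h
    · have hc0 : c ≤ 0 := by omega
      nlinarith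
    · exact h
    · have hc2 : 2 ≤ c := by omega
      nlinarith
  have hNeq : ∑ j ∈ Finset.range f, b j * (p:ℤ)^j = (p:ℤ)^f - 1 := by
    rw [hc, hc1, mul_one]
  -- all digits are p - 1
  have hgeom : ∑ j ∈ Finset.range f, ((p:ℤ) - 1) * (p:ℤ)^j = (p:ℤ)^f - 1 := by
    rw [← Finset.mul_sum, mul_comm, geom_sum_mul]
  have hzero : ∑ j ∈ Finset.range f, (b j - ((p:ℤ)-1)) * (p:ℤ)^j = 0 := by
    have hdist : ∑ j ∈ Finset.range f, (b j - ((p:ℤ)-1)) * (p:ℤ)^j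
        = (∑ j ∈ Finset.range f, b j * (p:ℤ)^j)
          - ∑ j ∈ Finset.range f, ((p:ℤ)-1) * (p:ℤ)^j := by
      rw [← Finset.sum_sub_distrib]
      apply Finset.sum_congr rfl
      intro j _; ring
    rw [hdist, hgeom, hNeq]; ring
  have hdig := digits_eq_zero (p:ℤ) (by omega) f (fun j => b j - ((p:ℤ)-1))
    (fun j hj => by
      have := hDb j
      show -(p:ℤ) < b j - ((p:ℤ)-1) ∧ b j - ((p:ℤ)-1) < (p:ℤ)
      omega) hzero
  have hall' : ∀ i : ℕ, i < f → d ((i:ZMod f)) = (p:ℤ) - 1 := by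
    intro i hi
    have hh := hdig (f-1-i) (by omega)
    simp only [hb] at hh
    rw [show f - 1 - (f - 1 - i) = i by omega] at hh
    omega
  have hvi : ∀ i : ZMod f, ((i.val : ℕ) : ZMod f) = i := fun i => by
    simp [ZMod.natCast_val, ZMod.cast_id]
  have hall : ∀ i : ZMod f, d i = (p:ℤ) - 1 := by
    intro i
    have := hall' i.val (ZMod.val_lt i)
    rwa [hvi i] at this
  -- everything is in J
  have hJall : ∀ i : ZMod f, i ∈ J := by
    intro i
    by_contra hJ
    have hh := hall i
    rw [hd i, if_neg hJ] at hh
    split_ifs at hh <;> omega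
  -- induction step: k j = 1 propagates
  have hstep : ∀ i : ZMod f, i ≠ 0 → k i = 1 → k (i + 1) = 1 := by
    intro i hi hki
    have hall_i := hall i
    rw [hd i, if_neg hi, if_pos (hJall i), hk'2 i, if_pos hki] at hall_i
    by_contra hA
    rw [if_neg hA] at hall_i
    rw [hki] at hall_i
    simp only [mul_one] at hall_i
    omega
  have hind : ∀ j : ℕ, 1 ≤ j → j ≤ f → k ((j : ZMod f)) = 1 := by
    intro j
    induction j with
    | zero => intro h _; exact absurd h (by omega)
    | succ m ih =>
      intro h1m hmf
      rcases Nat.eq_or_lt_of_le h1m with h | h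
      · have hm0 : m = 0 := by omega
        subst hm0
        simpa using h1
      · have hkm := ih (by omega) (by omega)
        have hm0 : ((m : ℕ) : ZMod f) ≠ 0 := by
          intro hh
          have hdv := (ZMod.natCast_eq_zero_iff m f).mp hh
          have := Nat.le_of_dvd (by omega) hdv
          omega
        have hres := hstep _ hm0 hkm
        rwa [show ((m:ZMod f) + 1) = ((m+1 : ℕ) : ZMod f) by push_cast; ring] at hres
  have hfin := hind f hf le_rfl
  rw [ZMod.natCast_self] at hfin
  omega
end
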